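/- arXiv:2309.11236 — 4 statements merged into one kernel-verified Lean document; each statement's English description precedes it below -/
import Mathlib

section
/- Let V be a finite type with decidable equality, let n : ℕ, let D D' : Fin n → Finset V be the per-argument ranges of two factors f g : (Fin n → V) → ℝ≥0, and suppose f and g represent equivalent potentials, i.e., there exists a permutation π : Equiv.Perm (Fin n) such that D' i = D (π i) for all i and f r = g (r ∘ π) for every assignment r : Fin n → V with r i ∈ D i for all i. Then (1) there exists a bijection τ : Equiv.Perm (Fin n) such that D i = D' (τ i) for all i, and (2) for every multiset h : Multiset V, the multiset of potentials of f over in-range assignments with histogram h equals the corresponding multiset for g: Multiset.map f ((Finset.univ.filter (fun r => (∀ i, r i ∈ D i) ∧ hist r = h)).val) = Multiset.map g ((Finset.univ.filter (fun r => (∀ i, r i ∈ D' i) ∧ hist r = h)).val). -/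
/-!
Precomposition `r ↦ r ∘ π` preserves histograms and carries the assignments in range `D`
bijectively onto those in range `D'`, while `f r = g (r ∘ π)` on them; so it matches the two
multisets of potentials term by term.
-/

open scoped NNReal

/-- The histogram of an assignment `r : Fin n → V` is the multiset of its values. -/
def hist {n : ℕ} {V : Type*} (r : Fin n → V) : Multiset V :=
  Multiset.map r Finset.univ.val

lemma hist_comp_perm {n : ℕ} {V : Type*} (r : Fin n → V) (π : Equiv.Perm (Fin n)) :
    hist (r ∘ π) = hist r := by
  rw [hist, hist, ← Multiset.map_map]
  exact congrArg (fun s : Finset (Fin n) => s.val.map r) (Finset.map_univ_equiv π)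

lemma Finset.map_filter_univ_val_eq_of_equiv {α β γ : Type*} [Fintype α] [Fintype β]
    (e : α ≃ β) {p : α → Prop} {q : β → Prop} [DecidablePred p] [DecidablePred q]
    (hpq : ∀ a, p a ↔ q (e a)) {f : α → γ} {g : β → γ} (hfg : ∀ a, p a → f a = g (e a)) :
    (univ.filter p).val.map f = (univ.filter q).val.map g := by
  have hfilter : univ.filter q = (univ.filter p).map e.toEmbedding := by
    rw [← Finset.map_univ_equiv e, Finset.filter_map]
    congr 2
    exact funext fun a => propext (hpq a).symm
  rw [hfilter, Finset.map_val, Multiset.map_map]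
  exact Multiset.map_congr rfl fun a ha => hfg a (Finset.mem_filter.mp ha).2

/-- **Necessary Conditions for Identical Potentials** (Theorem 1).
If two factors `f` and `g` represent equivalent potentials (via a permutation `π` of the
argument positions), then (1) there is a bijection `τ` matching the per-argument ranges, and
(2) for every histogram `h`, the multiset of potentials of `f` on in-range assignments with
histogram `h` equals the corresponding multiset for `g`. -/
theorem stmt_0 {V : Type*} [Fintype V] [DecidableEq V] (n : ℕ)
    (D D' : Fin n → Finset V) (f g : (Fin n → V) → ℝ≥0)
    (hequiv : ∃ π : Equiv.Perm (Fin n), (∀ i, D' i = D (π i)) ∧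
      ∀ r : Fin n → V, (∀ i, r i ∈ D i) → f r = g (r ∘ π)) :
    (∃ τ : Equiv.Perm (Fin n), ∀ i, D i = D' (τ i)) ∧
    ∀ h : Multiset V,
      Multiset.map f
        ((Finset.univ.filter (fun r : Fin n → V => (∀ i, r i ∈ D i) ∧ hist r = h)).val) =
      Multiset.map g
        ((Finset.univ.filter (fun r : Fin n → V => (∀ i, r i ∈ D' i) ∧ hist r = h)).val) := by
  obtain ⟨π, hD, hf⟩ := hequiv
  refine ⟨⟨π.symm, fun i => by rw [hD, Equiv.apply_symm_apply]⟩, fun h => ?_⟩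
  let precomp : (Fin n → V) ≃ (Fin n → V) := Equiv.arrowCongr π.symm (Equiv.refl V)
  refine Finset.map_filter_univ_val_eq_of_equiv precomp (fun r => ?_) (fun r hr => hf r hr.1)
  have hrange : (∀ i, r i ∈ D i) ↔ ∀ i, precomp r i ∈ D' i := by
    simp only [precomp, hD]
    exact (π.forall_congr_right (q := fun i => r i ∈ D i)).symm
  rw [hrange, show hist (precomp r) = hist r from hist_comp_perm r π]
end

section
/- Let V be a type, n : ℕ, and f : (Fin n → V) → ℝ≥0 a factor. Then f is commutative, i.e., f (r ∘ π) = f r for every permutation π : Equiv.Perm (Fin n) and every assignment r, if and only if there exists a function f' : Multiset V → ℝ≥0 such that f r = f' (hist r) for every assignment r. -/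
/-!
Two assignments have the same histogram exactly when one is a permutation of the other: matching
the fibres `{i // s i = v}` and `{i // r i = v}`, which have the same size `count v`, assembles
a permutation carrying `r` to `s`. Conversely, permuting an assignment does not change its
histogram. Hence `f` is commutative iff it factors through `hist`.
-/

open scoped NNReal

open Function

section

variable {ι V : Type*} [Fintype ι]

theorem Multiset.map_univ_val_comp_perm (r : ι → V) (σ : Equiv.Perm ι) :
    Finset.univ.val.map (r ∘ σ) = Finset.univ.val.map r := by
  rw [← Multiset.map_map, Multiset.map_univ_val_equiv]

theorem Nat.card_fiber_eq_count_map_univ_val [DecidableEq V] (r : ι → V) (v : V) :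
    Nat.card {i // r i = v} = (Finset.univ.val.map r).count v := by
  simp [Nat.card_eq_fintype_card, Fintype.card_subtype, Multiset.count_map, Finset.card,
    Finset.filter_val, eq_comm]

theorem Multiset.map_univ_val_eq_map_univ_val_iff {r s : ι → V} :
    Finset.univ.val.map r = Finset.univ.val.map s ↔ ∃ σ : Equiv.Perm ι, r ∘ σ = s := by
  classical
  constructor
  · intro h
    have fiber_equiv (v : V) : {i // s i = v} ≃ {i // r i = v} :=
      (Finite.card_eq.mp <| by
        rw [Nat.card_fiber_eq_count_map_univ_val, Nat.card_fiber_eq_count_map_univ_val, h]).some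
    exact ⟨Equiv.ofFiberEquiv fiber_equiv, funext (Equiv.ofFiberEquiv_map fiber_equiv)⟩
  · rintro ⟨σ, rfl⟩
    exact (Multiset.map_univ_val_comp_perm r σ).symm

theorem factorsThrough_map_univ_val_iff {γ : Type*} (f : (ι → V) → γ) :
    f.FactorsThrough (fun r => Finset.univ.val.map r) ↔
      ∀ (σ : Equiv.Perm ι) (r : ι → V), f (r ∘ σ) = f r := by
  constructor
  · intro hf σ r
    exact hf (Multiset.map_univ_val_comp_perm r σ)
  · intro hcomm r s hrs
    obtain ⟨σ, rfl⟩ := Multiset.map_univ_val_eq_map_univ_val_iff.mp hrs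
    exact (hcomm σ r).symm

end

/-- A factor `f` is commutative if and only if it factors through the histogram of its
arguments, i.e., it can be equivalently encoded by a factor taking a counting random variable
(a histogram) as its single argument. -/
theorem stmt_5 {V : Type*} (n : ℕ) (f : (Fin n → V) → ℝ≥0) :
    (∀ (π : Equiv.Perm (Fin n)) (r : Fin n → V), f (r ∘ π) = f r) ↔
      ∃ f' : Multiset V → ℝ≥0, ∀ r : Fin n → V, f r = f' (hist r) := by
  rw [← factorsThrough_map_univ_val_iff, factorsThrough_iff]
  simp only [funext_iff, comp_apply, hist]
end

section
/- Let V be a type with decidable equality, n : ℕ, S : Finset (Fin n), and f : (Fin n → V) → ℝ≥0 a factor. Then f is commutative with respect to S, i.e., f (r ∘ π) = f r for every assignment r and every permutation π : Equiv.Perm (Fin n) with π i = i for all i ∉ S, if and only if there exists a function f' : Multiset V → ({i : Fin n // i ∉ S} → V) → ℝ≥0 such that f r = f' (Multiset.map r S.val) (fun i => r i.val) for every assignment r; that is, f depends on the positions in S only through the histogram of their values. -/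
/-!
Two assignments that agree off `S` and have the same histogram on `S` differ by a permutation
supported on `S`: the fibres of each value have equal size on both sides, and matching them up
fibre by fibre gives the permutation. So a commutative factor is constant on the fibres of
`r ↦ (histogram of r on S, r off S)` and factors through that map; the converse holds because a
permutation supported on `S` permutes `S` and preserves both components.
-/

open scoped NNReal

theorem Equiv.Perm.exists_comp_eq_of_map_univ_eq {α β : Type*} [Fintype α] {f g : α → β}
    (h : Multiset.map f Finset.univ.val = Multiset.map g Finset.univ.val) :
    ∃ σ : Equiv.Perm α, g ∘ σ = f := by
  classical
  have hcard (b : β) : Fintype.card {a // f a = b} = Fintype.card {a // g a = b} := by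
    simpa [Fintype.card_subtype, Finset.card_def, Finset.filter_val, Multiset.count_map,
      eq_comm] using congrArg (Multiset.count b) h
  exact ⟨Equiv.ofFiberEquiv fun b => Fintype.equivOfCardEq (hcard b),
    funext (Equiv.ofFiberEquiv_map _)⟩

theorem Finset.map_comp_perm_val {α β : Type*} {S : Finset α} {π : Equiv.Perm α}
    (hπ : ∀ i ∉ S, π i = i) (r : α → β) :
    Multiset.map (r ∘ π) S.val = Multiset.map r S.val := by
  have hperm : S.map π.toEmbedding = S := Finset.map_perm fun i hi => by
    by_contra h
    exact hi (hπ i h)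
  calc Multiset.map (r ∘ π) S.val = Multiset.map r (S.map π.toEmbedding).val := by
        rw [Finset.map_val, Multiset.map_map]; rfl
    _ = Multiset.map r S.val := by rw [hperm]

theorem Finset.exists_perm_comp_eq_of_map_val_eq {α β : Type*} [DecidableEq α] {S : Finset α}
    {r₁ r₂ : α → β} (hout : ∀ i ∉ S, r₁ i = r₂ i)
    (hS : Multiset.map r₁ S.val = Multiset.map r₂ S.val) :
    ∃ π : Equiv.Perm α, (∀ i ∉ S, π i = i) ∧ r₂ ∘ π = r₁ := by
  have hval : Multiset.map Subtype.val (Finset.univ : Finset S).val = S.val := by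
    simpa using congrArg Finset.val (Finset.attach_map_val (s := S))
  have hS' : Multiset.map (r₁ ∘ Subtype.val) (Finset.univ : Finset S).val =
      Multiset.map (r₂ ∘ Subtype.val) (Finset.univ : Finset S).val := by
    rwa [← Multiset.map_map, ← Multiset.map_map, hval]
  obtain ⟨σ, hσ⟩ := Equiv.Perm.exists_comp_eq_of_map_univ_eq hS'
  refine ⟨Equiv.Perm.ofSubtype σ, fun i hi => Equiv.Perm.ofSubtype_apply_of_not_mem σ hi, ?_⟩
  funext i
  by_cases hi : i ∈ S
  · rw [Function.comp_apply, Equiv.Perm.ofSubtype_apply_of_mem σ hi]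
    exact congrFun hσ ⟨i, hi⟩
  · rw [Function.comp_apply, Equiv.Perm.ofSubtype_apply_of_not_mem σ hi, hout i hi]

theorem stmt_6_general {V : Type*} (n : ℕ) (S : Finset (Fin n))
    (f : (Fin n → V) → ℝ≥0) :
    (∀ (r : Fin n → V) (π : Equiv.Perm (Fin n)),
        (∀ i ∉ S, π i = i) → f (r ∘ π) = f r) ↔
      ∃ f' : Multiset V → ({i : Fin n // i ∉ S} → V) → ℝ≥0,
        ∀ r : Fin n → V, f r = f' (Multiset.map r S.val) (fun i => r i.val) := by
  constructor
  · intro hcomm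
    let split (r : Fin n → V) : Multiset V × ({i : Fin n // i ∉ S} → V) :=
      (Multiset.map r S.val, fun i => r i.val)
    have hfactors : f.FactorsThrough split := by
      intro r₁ r₂ hsplit
      obtain ⟨hS, hout⟩ := Prod.ext_iff.mp hsplit
      obtain ⟨π, hπ, rfl⟩ :=
        Finset.exists_perm_comp_eq_of_map_val_eq (fun i hi => congrFun hout ⟨i, hi⟩) hS
      exact hcomm r₂ π hπ
    exact ⟨Function.curry (Function.extend split f 0), fun r => (hfactors.extend_apply 0 r).symm⟩
  · rintro ⟨f', hf'⟩ r π hπ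
    rw [hf', hf', Finset.map_comp_perm_val hπ]
    congr 1
    funext i
    exact congrArg r (hπ i.val i.property)

/-- A factor `f` is commutative with respect to `S` (partially commutative, Definition 3) if
and only if it depends on the positions in `S` only through the histogram of their values, the
remaining arguments being transferred unchanged. -/
theorem stmt_6 {V : Type*} [DecidableEq V] (n : ℕ) (S : Finset (Fin n))
    (f : (Fin n → V) → ℝ≥0) :
    (∀ (r : Fin n → V) (π : Equiv.Perm (Fin n)),
        (∀ i ∉ S, π i = i) → f (r ∘ π) = f r) ↔
      ∃ f' : Multiset V → ({i : Fin n // i ∉ S} → V) → ℝ≥0,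
        ∀ r : Fin n → V, f r = f' (Multiset.map r S.val) (fun i => r i.val) :=
  stmt_6_general n S f
end

section
/- Let V be a finite type with Fintype.card V = m and m ≥ 1, and let n : ℕ. Then the number of histograms of assignments of n arguments over V, i.e., Fintype.card (Sym V n), is at most (n + 1) ^ (m - 1); in contrast, the number of assignments Fintype.card (Fin n → V) equals m ^ n. Hence for fixed range size m the table of a factor indexed by histograms has size polynomial in n while the table indexed by assignments has size exponential in n. -/
theorem Nat.multichoose_le_add_one_pow (m n : ℕ) : m.multichoose n ≤ (n + 1) ^ (m - 1) := by
  cases m with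
  | zero => cases n <;> simp
  | succ k =>
    rw [Nat.multichoose_eq, Nat.add_right_comm, Nat.add_sub_cancel, ← Nat.choose_symm_add,
      Nat.add_comm]
    exact Nat.choose_add_le_add_one_pow n k

theorem stmt_10_general {V : Type*} [Fintype V] [DecidableEq V] (m n : ℕ)
    (hm : Fintype.card V = m) :
    Fintype.card (Sym V n) ≤ (n + 1) ^ (m - 1) ∧
    Fintype.card (Fin n → V) = m ^ n := by
  subst hm
  refine ⟨?_, ?_⟩
  · rw [Sym.card_sym_eq_multichoose]
    exact Nat.multichoose_le_add_one_pow _ n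
  · rw [Fintype.card_fun, Fintype.card_fin]

/-- The number of histograms (multisets of size `n` over a range of size `m`, i.e., elements of
`Sym V n`) is at most `(n + 1) ^ (m - 1)`, polynomial in `n` for fixed `m`, whereas the number
of assignments `Fin n → V` is `m ^ n`, exponential in `n`. -/
theorem stmt_10 {V : Type*} [Fintype V] [DecidableEq V] (m n : ℕ)
    (hm : Fintype.card V = m) (hm1 : 1 ≤ m) :
    Fintype.card (Sym V n) ≤ (n + 1) ^ (m - 1) ∧
    Fintype.card (Fin n → V) = m ^ n :=
  stmt_10_general m n hm
end
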